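/- Let γ ∈ (-2, 2), β := 2/(2-γ), s := βγ. If u : Ω → (0,∞) is a C² function on an open set Ω ⊂ ℝ^d satisfying Δu = (γ/2) u^{γ-1} in Ω, then w := β u^{1/β} is a positive C² function on Ω satisfying Δw = (s/2)(1 - |∇w|²)/w in Ω. -/

import Mathlib

/-!
Write `w = φ ∘ u` with `φ r = β r ^ α`, `α = 1 / β = 1 - γ / 2`, so that `φ' r = r ^ (α - 1)`.
Along each coordinate line the one-variable chain rule gives
`Δw = φ'(u) Δu + φ''(u) |∇u|²`, while `|∇w|² = φ'(u)² |∇u|²`. Inserting the equation for `u`,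
both sides of the equation for `w` become `(γ / 2) (u ^ (-α) - u ^ (α - 2) |∇u|²)`.
-/

/-- The Laplacian of `u` at `x`, defined as the sum of the second derivatives
of `u` along the coordinate directions. -/
noncomputable def lap (d : ℕ) (u : EuclideanSpace ℝ (Fin d) → ℝ)
    (x : EuclideanSpace ℝ (Fin d)) : ℝ :=
  ∑ i : Fin d, deriv (deriv (fun t : ℝ => u (x + t • EuclideanSpace.single i 1))) 0

open Real Filter Topology

theorem deriv_deriv_comp {φ φ' f : ℝ → ℝ} {φ'' t₀ : ℝ}
    (hφ : ∀ᶠ r in 𝓝 (f t₀), HasDerivAt φ (φ' r) r) (hφ' : HasDerivAt φ' φ'' (f t₀))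
    (hf : ∀ᶠ t in 𝓝 t₀, DifferentiableAt ℝ f t) (hf' : DifferentiableAt ℝ (deriv f) t₀) :
    deriv (deriv fun t => φ (f t)) t₀ =
      φ'' * deriv f t₀ ^ 2 + φ' (f t₀) * deriv (deriv f) t₀ := by
  have hf₀ := hf.self_of_nhds
  have hφf : ∀ᶠ t in 𝓝 t₀, HasDerivAt φ (φ' (f t)) (f t) :=
    hf₀.continuousAt.eventually hφ
  have hderiv : deriv (fun t => φ (f t)) =ᶠ[𝓝 t₀] fun t => φ' (f t) * deriv f t :=
    (hφf.and hf).mono fun t ⟨hφt, hft⟩ => (hφt.comp t hft.hasDerivAt).deriv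
  have hprod : HasDerivAt (fun t => φ' (f t) * deriv f t)
      (φ'' * deriv f t₀ * deriv f t₀ + φ' (f t₀) * deriv (deriv f) t₀) t₀ :=
    (hφ'.comp t₀ hf₀.hasDerivAt).mul hf'.hasDerivAt
  rw [hderiv.deriv_eq, hprod.deriv]
  ring

theorem ContDiffAt.eventually_contDiffAt_comp_line {E F : Type*} [NormedAddCommGroup E]
    [NormedSpace ℝ E] [NormedAddCommGroup F] [NormedSpace ℝ F] {u : E → F} {x : E} {n : ℕ}
    (hu : ContDiffAt ℝ n u x) (v : E) :
    ∀ᶠ t in 𝓝 (0 : ℝ), ContDiffAt ℝ n (fun t => u (x + t • v)) t := by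
  have hline : ContDiff ℝ n fun t : ℝ => x + t • v := by fun_prop
  have hlim : Tendsto (fun t : ℝ => x + t • v) (𝓝 0) (𝓝 x) := by
    simpa using hline.continuous.tendsto 0
  exact (hlim.eventually (hu.eventually (by simp))).mono fun t ht => ht.comp t hline.contDiffAt

theorem norm_gradient_sq_eq_sum {d : ℕ} (u : EuclideanSpace ℝ (Fin d) → ℝ)
    (x : EuclideanSpace ℝ (Fin d)) :
    ‖gradient u x‖ ^ 2 = ∑ i : Fin d, fderiv ℝ u x (EuclideanSpace.single i 1) ^ 2 := by
  rw [EuclideanSpace.norm_sq_eq]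
  refine Finset.sum_congr rfl fun i _ => ?_
  rw [← inner_gradient_left, EuclideanSpace.inner_single_right]
  simp

theorem gradient_comp {E : Type*} [NormedAddCommGroup E] [InnerProductSpace ℝ E] [CompleteSpace E]
    {φ : ℝ → ℝ} {φ' : ℝ} {u : E → ℝ} {x : E}
    (hφ : HasDerivAt φ φ' (u x)) (hu : DifferentiableAt ℝ u x) :
    gradient (fun y => φ (u y)) x = φ' • gradient u x := by
  have hcomp : HasFDerivAt (fun y => φ (u y)) (φ' • fderiv ℝ u x) x :=
    hφ.comp_hasFDerivAt x hu.hasFDerivAt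
  rw [gradient, hcomp.fderiv, map_smul]
  rfl

theorem lap_comp {d : ℕ} {φ φ' : ℝ → ℝ} {φ'' : ℝ} {u : EuclideanSpace ℝ (Fin d) → ℝ}
    {x : EuclideanSpace ℝ (Fin d)}
    (hφ : ∀ᶠ r in 𝓝 (u x), HasDerivAt φ (φ' r) r) (hφ' : HasDerivAt φ' φ'' (u x))
    (hu : ContDiffAt ℝ 2 u x) :
    lap d (fun y => φ (u y)) x = φ' (u x) * lap d u x + φ'' * ‖gradient u x‖ ^ 2 := by
  rw [lap, lap, norm_gradient_sq_eq_sum, Finset.mul_sum, Finset.mul_sum,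
    ← Finset.sum_add_distrib]
  refine Finset.sum_congr rfl fun i _ => ?_
  set v := EuclideanSpace.single i (1 : ℝ)
  have hline := hu.eventually_contDiffAt_comp_line v
  have h₀ : u (x + (0 : ℝ) • v) = u x := by simp
  rw [deriv_deriv_comp (h₀ ▸ hφ) (h₀ ▸ hφ')
      (hline.mono fun t ht => ht.differentiableAt two_ne_zero)
      ((hline.self_of_nhds.derivWithin (m := 1) le_rfl).differentiableAt one_ne_zero),
    h₀, ← (hu.differentiableAt two_ne_zero).lineDeriv_eq_fderiv, lineDeriv]
  ring

theorem hasDerivAt_const_mul_rpow_one_div {β r : ℝ} (hβ : β ≠ 0) (hr : r ≠ 0) :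
    HasDerivAt (fun r => β * r ^ (1 / β)) (r ^ (1 / β - 1)) r := by
  simpa [hβ, ← mul_assoc] using (hasDerivAt_rpow_const (p := 1 / β) (Or.inl hr)).const_mul β

theorem stmt_2_general (d : ℕ) (γ β s : ℝ) (hγ₂ : γ < 2)
    (hβ : β = 2 / (2 - γ)) (hs : s = β * γ)
    (Ω : Set (EuclideanSpace ℝ (Fin d))) (hΩ : IsOpen Ω)
    (u : EuclideanSpace ℝ (Fin d) → ℝ) (hupos : ∀ x ∈ Ω, 0 < u x)
    (hureg : ContDiffOn ℝ 2 u Ω)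
    (hpde : ∀ x ∈ Ω, lap d u x = (γ / 2) * (u x) ^ (γ - 1))
    (w : EuclideanSpace ℝ (Fin d) → ℝ) (hw : ∀ x, w x = β * (u x) ^ (1 / β)) :
    (∀ x ∈ Ω, 0 < w x) ∧ ContDiffOn ℝ 2 w Ω ∧
      ∀ x ∈ Ω, lap d w x = (s / 2) * (1 - ‖gradient w x‖ ^ 2) / (w x) := by
  rw [show w = fun x => β * u x ^ (1 / β) from funext hw]
  have hβ₀ : 0 < β := by rw [hβ]; exact div_pos two_pos (by linarith)
  set α := 1 / β with hα
  have hφ : ∀ r ≠ 0, HasDerivAt (fun r => β * r ^ α) (r ^ (α - 1)) r := fun _ =>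
    hasDerivAt_const_mul_rpow_one_div hβ₀.ne'
  refine ⟨fun x hx => by have := hupos x hx; positivity,
    contDiffOn_const.mul (hureg.rpow_const_of_ne fun x hx => (hupos x hx).ne'), fun x hx => ?_⟩
  have hU := hupos x hx
  have hu := hureg.contDiffAt (hΩ.mem_nhds hx)
  rw [lap_comp (φ := fun r => β * r ^ α) ((eventually_ne_nhds hU.ne').mono hφ)
      (hasDerivAt_rpow_const (Or.inl hU.ne')) hu,
    gradient_comp (hφ _ hU.ne') (hu.differentiableAt two_ne_zero), hpde x hx, norm_smul]
  have hα₀ : α ≠ 0 := by positivity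
  have hγ : γ = 2 - 2 * α := by rw [hα, hβ]; field_simp; ring
  have hαβ : β = 1 / α := by rw [hα, one_div_one_div]
  have hA : 0 < u x ^ α := rpow_pos_of_pos hU α
  have e₁ : u x ^ (α - 1) = u x ^ α / u x := rpow_sub_one hU.ne' α
  have e₂ : u x ^ (α - 1 - 1) = u x ^ α / u x / u x := by rw [rpow_sub_one hU.ne', e₁]
  have e₃ : u x ^ (γ - 1) = u x / (u x ^ α * u x ^ α) := by
    rw [← rpow_add hU, eq_div_iff (by positivity), ← rpow_add hU, hγ,
      show 2 - 2 * α - 1 + (α + α) = 1 by ring, rpow_one]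
  rw [e₁, e₂, e₃, norm_of_nonneg (div_nonneg hA.le hU.le), hs, hγ, hαβ]
  field_simp
  ring

theorem stmt_2 (d : ℕ) (γ β s : ℝ) (hγ₁ : -2 < γ) (hγ₂ : γ < 2)
    (hβ : β = 2 / (2 - γ)) (hs : s = β * γ)
    (Ω : Set (EuclideanSpace ℝ (Fin d))) (hΩ : IsOpen Ω)
    (u : EuclideanSpace ℝ (Fin d) → ℝ) (hupos : ∀ x ∈ Ω, 0 < u x)
    (hureg : ContDiffOn ℝ 2 u Ω)
    (hpde : ∀ x ∈ Ω, lap d u x = (γ / 2) * (u x) ^ (γ - 1))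
    (w : EuclideanSpace ℝ (Fin d) → ℝ) (hw : ∀ x, w x = β * (u x) ^ (1 / β)) :
    (∀ x ∈ Ω, 0 < w x) ∧ ContDiffOn ℝ 2 w Ω ∧
      ∀ x ∈ Ω, lap d w x = (s / 2) * (1 - ‖gradient w x‖ ^ 2) / (w x) :=
  stmt_2_general d γ β s hγ₂ hβ hs Ω hΩ u hupos hureg hpde w hw
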